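/- If y is absolutely continuous on [-1,1] with y' in L^2(-1,1) and ∫_{-1}^{1} y(t) dt = 0, then for every x in [-1,1], |y(x)|^2 ≤ ((1+3x^2)/6) · ∫_{-1}^{1} |y'(t)|^2 dt, and the constant (1+3x^2)/6 is sharp. -/

import Mathlib

/-
Writing `y = y(-1) + ∫_{-1}^t y'` and integrating once by parts, the mean-zero condition gives
`y(-1) = -½ ∫ (1 - s) y'(s) ds`, hence `y(x) = ∫_{-1}^1 φₓ(s) y'(s) ds` with the kernel
`φₓ(s) = (s + 1)/2` for `s ≤ x` and `(s - 1)/2` for `s > x`. Cauchy–Schwarz bounds `y(x)²` by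
`‖φₓ‖₂² ‖y'‖₂²`, and `‖φₓ‖₂² = (1 + 3x²)/6`. Equality holds for `y' = φₓ`, which shows sharpness.
-/

/-- `W12 y g` : `y` is absolutely continuous on `[-1,1]` with derivative `g ∈ L²(-1,1)`. -/
def W12 (y g : ℝ → ℝ) : Prop :=
  IntervalIntegrable g MeasureTheory.volume (-1) 1 ∧
  IntervalIntegrable (fun t => g t ^ 2) MeasureTheory.volume (-1) 1 ∧
  ∀ t ∈ Set.Icc (-1 : ℝ) 1, y t = y (-1) + ∫ s in (-1 : ℝ)..t, g s

open MeasureTheory Set intervalIntegral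

theorem integral_primitive_eq_integral_mul {g : ℝ → ℝ} {a b : ℝ}
    (hg : IntervalIntegrable g volume a b) :
    ∫ t in a..b, (∫ s in a..t, g s) = ∫ s in a..b, (b - s) * g s := by
  have hG := hg.absolutelyContinuousOnInterval_intervalIntegral (c := a) left_mem_uIcc
  have hlin : AbsolutelyContinuousOnInterval (fun t => t - b) a b :=
    (contDiff_id.sub contDiff_const).contDiffOn.absolutelyContinuousOnInterval
  have hparts := hG.integral_mul_deriv_eq_deriv_mul hlin
  have hderiv : ∫ t in a..b, deriv (fun t => ∫ s in a..t, g s) t * (t - b)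
      = ∫ t in a..b, g t * (t - b) := by
    refine integral_congr_ae ?_
    filter_upwards [hg.ae_hasDerivAt_integral] with t ht hmem
    rw [(ht (uIoc_subset_uIcc hmem) a left_mem_uIcc).deriv]
  simp only [deriv_sub_const, deriv_id'', mul_one, sub_self, mul_zero, integral_same,
    zero_mul, hderiv] at hparts
  rw [hparts, zero_sub, ← intervalIntegral.integral_neg]
  exact integral_congr fun s _ => by ring

theorem sq_integral_mul_le {α : Type*} [MeasurableSpace α] {μ : Measure α} {f g : α → ℝ}
    (hf : Integrable (fun s => f s ^ 2) μ) (hg : Integrable (fun s => g s ^ 2) μ)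
    (hfg : Integrable (fun s => f s * g s) μ) :
    (∫ s, f s * g s ∂μ) ^ 2 ≤ (∫ s, f s ^ 2 ∂μ) * ∫ s, g s ^ 2 ∂μ := by
  have hquad : ∀ t : ℝ, 0 ≤ (∫ s, f s ^ 2 ∂μ) * (t * t) + 2 * (∫ s, f s * g s ∂μ) * t
      + ∫ s, g s ^ 2 ∂μ := by
    intro t
    have hexp : ∫ s, (t * f s + g s) ^ 2 ∂μ
        = (∫ s, f s ^ 2 ∂μ) * (t * t) + 2 * (∫ s, f s * g s ∂μ) * t + ∫ s, g s ^ 2 ∂μ := by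
      have hsplit : (fun s => (t * f s + g s) ^ 2)
          = fun s => (t ^ 2 * f s ^ 2 + 2 * t * (f s * g s)) + g s ^ 2 := by
        ext s; ring
      rw [hsplit, integral_add (f := fun s => t ^ 2 * f s ^ 2 + 2 * t * (f s * g s))
          ((hf.const_mul _).add (hfg.const_mul _)) hg,
        integral_add (hf.const_mul _) (hfg.const_mul _), MeasureTheory.integral_const_mul,
        MeasureTheory.integral_const_mul]
      ring
    exact hexp ▸ integral_nonneg fun s => sq_nonneg _
  have hdisc := discrim_le_zero hquad
  rw [discrim] at hdisc
  linarith

section Piecewise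

variable {f₁ f₂ : ℝ → ℝ} {a x b : ℝ}

theorem eqOn_ite_le_left (hax : a ≤ x) :
    EqOn (fun s => if s ≤ x then f₁ s else f₂ s) f₁ (uIoo a x) := by
  intro s hs
  rw [uIoo_of_le hax] at hs
  simp [hs.2.le]

theorem eqOn_ite_le_right (hxb : x ≤ b) :
    EqOn (fun s => if s ≤ x then f₁ s else f₂ s) f₂ (uIoo x b) := by
  intro s hs
  rw [uIoo_of_le hxb] at hs
  simp [not_le.2 hs.1]

theorem IntervalIntegrable.ite_le (hax : a ≤ x) (hxb : x ≤ b)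
    (h₁ : IntervalIntegrable f₁ volume a x) (h₂ : IntervalIntegrable f₂ volume x b) :
    IntervalIntegrable (fun s => if s ≤ x then f₁ s else f₂ s) volume a b :=
  ((intervalIntegrable_congr_uIoo (eqOn_ite_le_left hax)).2 h₁).trans
    ((intervalIntegrable_congr_uIoo (eqOn_ite_le_right hxb)).2 h₂)

theorem integral_ite_le (hax : a ≤ x) (hxb : x ≤ b)
    (h₁ : IntervalIntegrable f₁ volume a x) (h₂ : IntervalIntegrable f₂ volume x b) :
    ∫ s in a..b, (if s ≤ x then f₁ s else f₂ s) = (∫ s in a..x, f₁ s) + ∫ s in x..b, f₂ s := by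
  rw [← integral_add_adjacent_intervals
    ((intervalIntegrable_congr_uIoo (eqOn_ite_le_left hax)).2 h₁)
    ((intervalIntegrable_congr_uIoo (eqOn_ite_le_right hxb)).2 h₂),
    integral_congr_uIoo (eqOn_ite_le_left hax), integral_congr_uIoo (eqOn_ite_le_right hxb)]

end Piecewise

noncomputable def poincareKernel (x s : ℝ) : ℝ :=
  if s ≤ x then (s + 1) / 2 else (s - 1) / 2

section Kernel

variable {x : ℝ} {g : ℝ → ℝ}

theorem intervalIntegrable_poincareKernel (hx : x ∈ Icc (-1 : ℝ) 1) :
    IntervalIntegrable (poincareKernel x) volume (-1) 1 :=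
  .ite_le hx.1 hx.2 ((by fun_prop : Continuous _).intervalIntegrable _ _)
    ((by fun_prop : Continuous _).intervalIntegrable _ _)

theorem intervalIntegrable_poincareKernel_mul (hx : x ∈ Icc (-1 : ℝ) 1)
    (hg : IntervalIntegrable g volume (-1) 1) :
    IntervalIntegrable (fun s => poincareKernel x s * g s) volume (-1) 1 := by
  have hxmem : x ∈ uIcc (-1 : ℝ) 1 := Icc_subset_uIcc hx
  simp only [poincareKernel, ite_mul]
  exact .ite_le hx.1 hx.2
    ((hg.mono_set (uIcc_subset_uIcc_left hxmem)).continuousOn_mul (by fun_prop))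
    ((hg.mono_set (uIcc_subset_uIcc_right hxmem)).continuousOn_mul (by fun_prop))

theorem intervalIntegrable_poincareKernel_sq (hx : x ∈ Icc (-1 : ℝ) 1) :
    IntervalIntegrable (fun s => poincareKernel x s ^ 2) volume (-1) 1 := by
  simp only [poincareKernel, ite_pow]
  exact .ite_le hx.1 hx.2 ((by fun_prop : Continuous _).intervalIntegrable _ _)
    ((by fun_prop : Continuous _).intervalIntegrable _ _)

theorem integral_poincareKernel_sq (hx : x ∈ Icc (-1 : ℝ) 1) :
    ∫ s in (-1 : ℝ)..1, poincareKernel x s ^ 2 = (1 + 3 * x ^ 2) / 6 := by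
  simp only [poincareKernel, ite_pow]
  rw [integral_ite_le hx.1 hx.2 ((by fun_prop : Continuous _).intervalIntegrable _ _)
    ((by fun_prop : Continuous _).intervalIntegrable _ _)]
  simp only [div_pow, intervalIntegral.integral_div, sub_eq_add_neg,
    integral_comp_add_right (fun u => u ^ 2), integral_pow]
  ring

end Kernel

section W12

variable {y g : ℝ → ℝ} {x : ℝ}

theorem W12.eq_integral_poincareKernel_mul (hy : W12 y g)
    (hmean : ∫ t in (-1 : ℝ)..1, y t = 0) (hx : x ∈ Icc (-1 : ℝ) 1) :
    y x = ∫ s in (-1 : ℝ)..1, poincareKernel x s * g s := by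
  obtain ⟨hg, -, hrep⟩ := hy
  have hgx : IntervalIntegrable g volume (-1) x :=
    hg.mono_set (uIcc_subset_uIcc_left (Icc_subset_uIcc hx))
  have hweight : IntervalIntegrable (fun s => (1 - s) * g s) volume (-1) 1 :=
    hg.continuousOn_mul (by fun_prop)
  have hstart : y (-1) = -(1 / 2) * ∫ s in (-1 : ℝ)..1, (1 - s) * g s := by
    have hprim : IntervalIntegrable (fun t => ∫ s in (-1 : ℝ)..t, g s) volume (-1) 1 :=
      (continuousOn_primitive_interval' hg left_mem_uIcc).intervalIntegrable
    rw [integral_congr (g := fun t => y (-1) + ∫ s in (-1 : ℝ)..t, g s)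
        (fun t ht => hrep t (by rwa [uIcc_of_le (by norm_num)] at ht)),
      integral_add intervalIntegrable_const hprim, intervalIntegral.integral_const,
      integral_primitive_eq_integral_mul hg] at hmean
    norm_num at hmean
    linarith
  have hcut : ∫ s in (-1 : ℝ)..x, g s = ∫ s in (-1 : ℝ)..1, (if s ≤ x then g s else 0) := by
    rw [integral_ite_le hx.1 hx.2 hgx intervalIntegrable_const, intervalIntegral.integral_zero,
      add_zero]
  have hcutInt : IntervalIntegrable (fun s => if s ≤ x then g s else 0) volume (-1) 1 :=
    .ite_le hx.1 hx.2 hgx intervalIntegrable_const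
  calc y x = y (-1) + ∫ s in (-1 : ℝ)..x, g s := hrep x hx
    _ = ∫ s in (-1 : ℝ)..1, ((if s ≤ x then g s else 0) - 1 / 2 * ((1 - s) * g s)) := by
      rw [integral_sub hcutInt (hweight.const_mul _), intervalIntegral.integral_const_mul, hstart,
        hcut]
      ring
    _ = ∫ s in (-1 : ℝ)..1, poincareKernel x s * g s :=
      integral_congr fun s _ => by simp only [poincareKernel]; split_ifs <;> ring

theorem W12.sq_le (hy : W12 y g) (hmean : ∫ t in (-1 : ℝ)..1, y t = 0)
    (hx : x ∈ Icc (-1 : ℝ) 1) :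
    y x ^ 2 ≤ (1 + 3 * x ^ 2) / 6 * ∫ t in (-1 : ℝ)..1, g t ^ 2 := by
  have hcs := sq_integral_mul_le (intervalIntegrable_poincareKernel_sq hx).1 hy.2.1.1
    (intervalIntegrable_poincareKernel_mul hx hy.1).1
  simp only [← integral_of_le (show (-1 : ℝ) ≤ 1 by norm_num)] at hcs
  rwa [integral_poincareKernel_sq hx, ← hy.eq_integral_poincareKernel_mul hmean hx] at hcs

end W12

theorem exists_W12_poincareKernel_eq {x : ℝ} (hx : x ∈ Icc (-1 : ℝ) 1) :
    ∃ y, W12 y (poincareKernel x) ∧ ∫ t in (-1 : ℝ)..1, y t = 0 ∧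
      y x = (1 + 3 * x ^ 2) / 6 := by
  set φ := poincareKernel x
  have hφ : IntervalIntegrable φ volume (-1) 1 := intervalIntegrable_poincareKernel hx
  set c := 1 / 2 * ∫ s in (-1 : ℝ)..1, (1 - s) * φ s
  set y := fun t => (∫ s in (-1 : ℝ)..t, φ s) - c
  have hy : W12 y φ := ⟨hφ, intervalIntegrable_poincareKernel_sq hx, fun t _ => by
    simp only [y, integral_same]; ring⟩
  have hmean : ∫ t in (-1 : ℝ)..1, y t = 0 := by
    rw [integral_sub (continuousOn_primitive_interval' hφ left_mem_uIcc).intervalIntegrable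
        intervalIntegrable_const, integral_primitive_eq_integral_mul hφ,
      intervalIntegral.integral_const]
    norm_num [c]
    ring
  refine ⟨y, hy, hmean, ?_⟩
  rw [hy.eq_integral_poincareKernel_mul hmean hx, ← integral_poincareKernel_sq hx]
  simp only [φ, sq]

theorem poincare_m1 :
    (∀ y g : ℝ → ℝ, W12 y g → (∫ t in (-1:ℝ)..1, y t) = 0 →
      ∀ x ∈ Set.Icc (-1:ℝ) 1,
        (y x) ^ 2 ≤ (1 + 3 * x ^ 2) / 6 * ∫ t in (-1:ℝ)..1, (g t) ^ 2) ∧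
    (∀ x ∈ Set.Icc (-1:ℝ) 1, ∀ B : ℝ,
      (∀ y g : ℝ → ℝ, W12 y g → (∫ t in (-1:ℝ)..1, y t) = 0 →
        (y x) ^ 2 ≤ B * ∫ t in (-1:ℝ)..1, (g t) ^ 2) →
      (1 + 3 * x ^ 2) / 6 ≤ B) := by
  refine ⟨fun y g hy hmean x hx => hy.sq_le hmean hx, fun x hx B hB => ?_⟩
  obtain ⟨y, hy, hmean, hyx⟩ := exists_W12_poincareKernel_eq hx
  have hbound := hB y _ hy hmean
  rw [hyx, integral_poincareKernel_sq hx, sq] at hbound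
  exact le_of_mul_le_mul_right hbound (by positivity)
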